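/- arXiv:1003.5149 — 2 statements merged into one kernel-verified Lean document; each statement's English description precedes it below -/
import Mathlib

section
/- Let K be an algebraically closed field of characteristic 0, L/K a field extension, l ≥ 2 an integer, and a₁,…,aₙ ∈ L nonzero. If the Galois group Gal(K(l-th roots of a₁,…,aₙ)/K(a₁,…,aₙ)) is isomorphic to (ℤ/lℤ)ⁿ, then the tuple (a₁,…,aₙ) is multiplicatively independent over K^× (i.e. the only integers m₁,…,mₙ with a₁^{m₁}⋯aₙ^{mₙ} ∈ K^× are m₁=⋯=mₙ=0). -/
/-!
The map `σ ↦ (σ αᵢ / αᵢ)ᵢ` embeds `Gal(F/E)` into `μ_l(F)ⁿ`, a set with at most `lⁿ` elements;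
as the Galois group has `lⁿ` elements, it is onto. So for each `i` some `σ` multiplies `αᵢ` by a
primitive `l`-th root of unity `ζ` and fixes the other `αⱼ`; if `∏ αⱼ ^ mⱼ ∈ K`, this `σ` fixes it,
whence `ζ ^ mᵢ = 1` and `l ∣ mᵢ`. Now if `∏ aⱼ ^ mⱼ ∈ K`, then `∏ αⱼ ^ mⱼ` is an `l`-th root of
it, hence lies in the algebraically closed `K`; so `m = l • m'` with `∏ aⱼ ^ m'ⱼ = ∏ αⱼ ^ mⱼ ∈ K`.
Iterating, every `mᵢ` is divisible by all powers of `l`, hence zero.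
-/

open IntermediateField

theorem IntermediateField.algHom_ext_of_adjoin_eq_top {E F K : Type*} [Field E] [Field F]
    [Field K] [Algebra E F] [Algebra E K] {s : Set F} (hs : adjoin E s = ⊤)
    ⦃φ₁ φ₂ : F →ₐ[E] K⦄ (h : Set.EqOn φ₁ φ₂ s) : φ₁ = φ₂ := by
  ext y
  have hφ := adjoin_algHom_ext E (φ₁ := φ₁.comp (adjoin E s).val)
    (φ₂ := φ₂.comp (adjoin E s).val) fun _ hz ↦ h hz
  exact DFunLike.congr_fun hφ ⟨y, hs ▸ mem_top⟩

theorem Polynomial.card_nthRootsFinset_le {R : Type*} [CommRing R] [IsDomain R] (n : ℕ) (a : R) :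
    (nthRootsFinset n a).card ≤ n := by
  classical
  rw [nthRootsFinset_def]
  exact (Multiset.toFinset_card_le _).trans (card_nthRoots n a)

theorem IntermediateField.adjoin_preimage_val_eq_top {E L : Type*} [Field E] [Field L]
    [Algebra E L] (S : Set L) : adjoin E (((↑) : adjoin E S → L) ⁻¹' S) = ⊤ := by
  apply map_injective (adjoin E S).val
  rw [adjoin_map, ← AlgHom.fieldRange_eq_map, fieldRange_val, coe_val,
    Set.image_preimage_eq_of_subset (by simp [subset_adjoin])]

section Kummer

variable {E F ι : Type*} [Field E] [Field F] [Algebra E F] [Fintype ι] {l : ℕ} {x : ι → F}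

theorem algEquiv_apply_div_self_pow_eq_one {y : F} (hy : y ≠ 0)
    (hyl : y ^ l ∈ (algebraMap E F).range) (σ : F ≃ₐ[E] F) : (σ y / y) ^ l = 1 := by
  obtain ⟨c, hc⟩ := hyl
  rw [div_pow, ← map_pow, ← hc, AlgEquiv.commutes, hc, div_self (pow_ne_zero l hy)]

variable (hl : 0 < l) (hx0 : ∀ i, x i ≠ 0) (hxl : ∀ i, x i ^ l ∈ (algebraMap E F).range)
  (hx : adjoin E (Set.range x) = ⊤) (hcard : Nat.card (F ≃ₐ[E] F) = l ^ Fintype.card ι)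
include hl hx0 hxl hx hcard

theorem exists_algEquiv_apply_eq_mul {ξ : ι → F} (hξ : ∀ i, ξ i ^ l = 1) :
    ∃ σ : F ≃ₐ[E] F, ∀ i, σ (x i) = ξ i * x i := by
  let κ : (F ≃ₐ[E] F) → ι → Polynomial.nthRootsFinset l (1 : F) := fun σ i ↦
    ⟨σ (x i) / x i, (Polynomial.mem_nthRootsFinset hl 1).2
      (algEquiv_apply_div_self_pow_eq_one (hx0 i) (hxl i) σ)⟩
  have hκ : κ.Injective := fun σ τ h ↦ AlgEquiv.coe_toAlgHom_injective <|
    algHom_ext_of_adjoin_eq_top hx <| by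
      rintro _ ⟨i, rfl⟩
      exact (div_left_inj' (hx0 i)).1 (congrArg Subtype.val (congrFun h i))
  have hκ_bij : κ.Bijective := hκ.bijective_of_nat_card_le <| by
    simpa [Nat.card_pi, hcard] using
      Nat.pow_le_pow_left (Polynomial.card_nthRootsFinset_le l (1 : F)) _
  obtain ⟨σ, hσ⟩ := hκ_bij.2 fun i ↦ ⟨ξ i, (Polynomial.mem_nthRootsFinset hl 1).2 (hξ i)⟩
  exact ⟨σ, fun i ↦ (div_eq_iff (hx0 i)).1 (congrArg Subtype.val (congrFun hσ i))⟩

theorem natCast_dvd_of_prod_zpow_mem_range {ζ : F} (hζ : IsPrimitiveRoot ζ l) {m : ι → ℤ}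
    (hm : ∏ i, x i ^ m i ∈ (algebraMap E F).range) (i : ι) : (l : ℤ) ∣ m i := by
  classical
  obtain ⟨σ, hσ⟩ := exists_algEquiv_apply_eq_mul hl hx0 hxl hx hcard (ξ := Pi.mulSingle i ζ)
    fun j ↦ by by_cases hj : j = i <;> simp [hj, hζ.pow_eq_one]
  obtain ⟨c, hc⟩ := hm
  have hP0 : ∏ j, x j ^ m j ≠ 0 := Finset.prod_ne_zero_iff.2 fun j _ ↦ zpow_ne_zero _ (hx0 j)
  have hσP : σ (∏ j, x j ^ m j) = ζ ^ m i * ∏ j, x j ^ m j := by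
    simp only [map_prod, map_zpow₀, hσ, mul_zpow, Finset.prod_mul_distrib]
    congr 1
    rw [Fintype.prod_eq_single i fun j hj ↦ by simp [hj]]
    simp
  rw [← hζ.zpow_eq_one_iff_dvd, ← mul_eq_right₀ hP0, ← hσP, ← hc, AlgEquiv.commutes]

end Kummer

theorem IntermediateField.natCast_dvd_of_prod_zpow_mem_range_of_eq_adjoin {E L ι : Type*}
    [Field E] [Field L] [Algebra E L] [Fintype ι] {l : ℕ} (hl : 0 < l) {α : ι → L} (hα0 : ∀ i, α i ≠ 0)
    (hαl : ∀ i, α i ^ l ∈ (algebraMap E L).range) {F : IntermediateField E L}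
    (hF : F = adjoin E (Set.range α)) (hcard : Nat.card (F ≃ₐ[E] F) = l ^ Fintype.card ι)
    {ζ : E} (hζ : IsPrimitiveRoot ζ l) {m : ι → ℤ}
    (hm : ∏ i, α i ^ m i ∈ (algebraMap E L).range) (i : ι) : (l : ℤ) ∣ m i := by
  subst hF
  let x : ι → adjoin E (Set.range α) := fun i ↦ ⟨α i, subset_adjoin E _ ⟨i, rfl⟩⟩
  have hx : adjoin E (Set.range x) = ⊤ := by
    have hrange : Set.range x = Subtype.val ⁻¹' Set.range α := by
      ext ⟨y, hy⟩
      simp [x, Subtype.ext_iff]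
    rw [hrange]
    exact adjoin_preimage_val_eq_top _
  have hx0 : ∀ i, x i ≠ 0 := fun i h ↦ hα0 i (congrArg Subtype.val h)
  have hxl : ∀ i, x i ^ l ∈ (algebraMap E (adjoin E (Set.range α))).range := fun i ↦
    let ⟨c, hc⟩ := hαl i
    ⟨c, Subtype.ext (by simp [x, hc])⟩
  obtain ⟨c, hc⟩ := hm
  refine natCast_dvd_of_prod_zpow_mem_range hl hx0 hxl hx hcard
    (hζ.map_of_injective (algebraMap E _).injective) ⟨c, Subtype.ext ?_⟩ i
  change algebraMap E L c = (adjoin E (Set.range α)).val (∏ i, x i ^ m i)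
  simp only [hc, map_prod, map_zpow₀]
  rfl

theorem Int.eq_zero_of_forall_pow_dvd {l m : ℤ} (hl : 1 < l.natAbs) (h : ∀ k : ℕ, l ^ k ∣ m) :
    m = 0 :=
  Int.eq_zero_of_dvd_of_natAbs_lt_natAbs (h m.natAbs) <| by
    rw [Int.natAbs_pow]
    calc m.natAbs < 2 ^ m.natAbs := Nat.lt_two_pow_self
      _ ≤ l.natAbs ^ m.natAbs := Nat.pow_le_pow_left (by omega) _

theorem eq_zero_of_forall_mem_exists_eq_smul {ι : Type*} {S : Set (ι → ℤ)} {l : ℤ}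
    (hl : 1 < l.natAbs)
    (hS : ∀ m ∈ S, ∃ m' ∈ S, m = l • m') {m : ι → ℤ} (hm : m ∈ S) : m = 0 := by
  have hdvd : ∀ k : ℕ, ∀ m ∈ S, ∀ i, l ^ k ∣ m i := by
    intro k
    induction k with
    | zero => simp
    | succ k ih =>
      intro m hm i
      obtain ⟨m', hm', rfl⟩ := hS m hm
      rw [pow_succ']
      exact mul_dvd_mul_left l (ih m' hm' i)
  funext i
  exact Int.eq_zero_of_forall_pow_dvd hl fun k ↦ hdvd k m hm i

theorem mem_range_of_pow_mem_range {K L : Type*} [Field K] [Field L] [Algebra K L]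
    [IsAlgClosed K] {l : ℕ} (hl : 0 < l) {y : L} (hy : y ^ l ∈ (algebraMap K L).range) :
    y ∈ (algebraMap K L).range := by
  obtain ⟨c, hc⟩ := hy
  have hint : IsIntegral K y := .of_pow hl (hc ▸ isIntegral_algebraMap)
  exact minpoly.natDegree_eq_one_iff.1 <| Polynomial.natDegree_eq_of_degree_eq_some <|
    IsAlgClosed.degree_eq_one_of_irreducible K (minpoly.irreducible hint)

theorem exists_eq_smul_of_prod_zpow_mem_range {K L ι : Type*} [Field K] [Field L] [Algebra K L]
    [IsAlgClosed K] [Fintype ι] {l : ℕ} (hl : 0 < l) {a α : ι → L} (hα : ∀ i, α i ^ l = a i)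
    (hdvd : ∀ m : ι → ℤ, ∏ i, α i ^ m i ∈ (algebraMap K L).range → ∀ i, (l : ℤ) ∣ m i)
    {m : ι → ℤ} (hm : ∏ i, a i ^ m i ∈ (algebraMap K L).range) :
    ∃ m' : ι → ℤ, ∏ i, a i ^ m' i ∈ (algebraMap K L).range ∧ m = (l : ℤ) • m' := by
  have hαm : ∏ i, α i ^ m i ∈ (algebraMap K L).range := by
    refine mem_range_of_pow_mem_range hl ?_
    convert hm using 1
    rw [← Finset.prod_pow]
    refine Finset.prod_congr rfl fun i _ ↦ ?_
    rw [← hα i, ← zpow_natCast, ← zpow_natCast, ← zpow_mul, ← zpow_mul, mul_comm]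
  choose m' hm' using hdvd m hαm
  refine ⟨m', ?_, funext hm'⟩
  convert hαm using 1
  refine Finset.prod_congr rfl fun i _ ↦ ?_
  rw [hm' i, ← hα i, ← zpow_natCast, ← zpow_mul]

/-- Let `K` be algebraically closed of characteristic `0`, `L/K` a
field extension, `l ≥ 2`, and `a₁,…,aₙ ∈ L` nonzero with chosen `l`-th roots
`α₁,…,αₙ`.  If `Gal(K(α₁,…,αₙ)/K(a₁,…,aₙ)) ≅ (ℤ/lℤ)ⁿ`, then `(a₁,…,aₙ)` is
multiplicatively independent over `K^×`. -/
theorem stmt0 {K L : Type*} [Field K] [Field L] [Algebra K L]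
    [IsAlgClosed K] [CharZero K] (n l : ℕ) (hl : 2 ≤ l)
    (a α : Fin n → L) (ha : ∀ i, a i ≠ 0) (hα : ∀ i, α i ^ l = a i)
    (E : IntermediateField K L) (hE : E = adjoin K (Set.range a))
    (F : IntermediateField E L) (hF : F = adjoin E (Set.range α))
    (hGal : Nonempty ((↥F ≃ₐ[↥E] ↥F) ≃* (Fin n → ZMod l))) :
    ∀ m : Fin n → ℤ, (∏ i, a i ^ m i) ∈ (algebraMap K L).range → ∀ i, m i = 0 := by
  intro m hm i
  have hl0 : 0 < l := by omega
  have : NeZero (l : K) := ⟨by exact_mod_cast hl0.ne'⟩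
  obtain ⟨ζ, hζ⟩ := HasEnoughRootsOfUnity.exists_primitiveRoot K l
  have hα0 : ∀ i, α i ≠ 0 := fun i h ↦ ha i <| by rw [← hα i, h, zero_pow hl0.ne']
  have hαl : ∀ i, α i ^ l ∈ (algebraMap E L).range :=
    fun i ↦ ⟨⟨a i, hE ▸ subset_adjoin K _ ⟨i, rfl⟩⟩, (hα i).symm⟩
  have hcard : Nat.card (F ≃ₐ[E] F) = l ^ Fintype.card (Fin n) := by
    simp [Nat.card_congr hGal.some.toEquiv, Nat.card_pi, Nat.card_zmod]
  have hdvd : ∀ m : Fin n → ℤ, ∏ i, α i ^ m i ∈ (algebraMap K L).range → ∀ i, (l : ℤ) ∣ m i :=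
    fun m ⟨c, hc⟩ ↦ natCast_dvd_of_prod_zpow_mem_range_of_eq_adjoin hl0 hα0 hαl hF hcard
      (hζ.map_of_injective (algebraMap K E).injective) ⟨algebraMap K E c, hc⟩
  refine congrFun (eq_zero_of_forall_mem_exists_eq_smul (l := l) (by omega)
    (S := {m | ∏ i, a i ^ m i ∈ (algebraMap K L).range}) (fun m hm ↦ ?_) hm) i
  exact exists_eq_smul_of_prod_zpow_mem_range hl0 hα hdvd hm
end

section
/- Let f: X → Y be a surjective group homomorphism of abelian groups whose kernel is the torsion subgroup of X. Then for any subgroup B ≤ Y and any prime p, the preimage f⁻¹(B) is p-pure in X if and only if B is p-pure in Y. -/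
/-!
The image of a `p`-th root of an element of `f⁻¹(B)` is a `p`-th root in `Y`, which settles one
direction using only surjectivity. Conversely, `Y ≅ X / Tor(X)` is torsion-free, so `p`-th roots
in `Y` are unique: a root of `f a` found in `B` must be the image of any root of `a` in `X`, and
that root then lies in `f⁻¹(B)`.
-/

namespace Subgroup

variable {G H : Type*} [Group G] [Group H]

def IsPure (B : Subgroup G) (n : ℕ) : Prop :=
  ∀ b ∈ B, (∃ x : G, x ^ n = b) → ∃ y ∈ B, y ^ n = b

theorem IsPure.of_comap {f : G →* H} (hf : Function.Surjective f) {B : Subgroup H} {n : ℕ}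
    (h : (B.comap f).IsPure n) : B.IsPure n := by
  rintro _ hb ⟨y, rfl⟩
  obtain ⟨x, rfl⟩ := hf y
  obtain ⟨z, hz, hzx⟩ := h (x ^ n) (by simpa [mem_comap] using hb) ⟨x, rfl⟩
  exact ⟨f z, hz, by rw [← map_pow, hzx, map_pow]⟩

theorem IsPure.comap [IsMulTorsionFree H] (f : G →* H) {B : Subgroup H} {n : ℕ} (hn : n ≠ 0)
    (h : B.IsPure n) : (B.comap f).IsPure n := by
  rintro _ ha ⟨x, rfl⟩
  obtain ⟨y, hy, hyx⟩ := h (f (x ^ n)) ha ⟨f x, (map_pow f x n).symm⟩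
  have hfx : f x = y := pow_left_injective hn (by simpa using hyx.symm)
  exact ⟨x, by rwa [mem_comap, hfx], rfl⟩

end Subgroup

theorem MonoidHom.isMulTorsionFree_of_surjective_of_ker_eq_torsion {X Y : Type*} [CommGroup X]
    [Group Y] {f : X →* Y} (hf : Function.Surjective f) (hker : f.ker = CommGroup.torsion X) :
    IsMulTorsionFree Y :=
  let e := (QuotientGroup.quotientKerEquivOfSurjective f hf).symm.trans
    (QuotientGroup.quotientMulEquivOfEq hker)
  e.injective.isMulTorsionFree e.toMonoidHom

/-- If `f : X → Y` is a surjective homomorphism of abelian groups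
whose kernel is exactly the torsion subgroup of `X`, then for a subgroup `B ≤ Y`
and a prime `p`, the preimage `f⁻¹(B)` is `p`-pure in `X` iff `B` is `p`-pure in `Y`. -/
theorem stmt17 {X Y : Type*} [CommGroup X] [CommGroup Y] (f : X →* Y)
    (hsurj : Function.Surjective f)
    (hker : ∀ x : X, f x = 1 ↔ ∃ m : ℕ, 0 < m ∧ x ^ m = 1)
    (B : Subgroup Y) (p : ℕ) (hp : p.Prime) :
    (∀ b ∈ B.comap f, (∃ x : X, x ^ p = b) → ∃ y ∈ B.comap f, y ^ p = b) ↔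
      (∀ b ∈ B, (∃ x : Y, x ^ p = b) → ∃ y ∈ B, y ^ p = b) := by
  have : IsMulTorsionFree Y := f.isMulTorsionFree_of_surjective_of_ker_eq_torsion hsurj <| by
    ext x
    rw [MonoidHom.mem_ker, hker, CommGroup.mem_torsion, isOfFinOrder_iff_pow_eq_one]
  exact ⟨Subgroup.IsPure.of_comap hsurj, Subgroup.IsPure.comap f hp.ne_zero⟩
end
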